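/- Let $k \ge 2$ and $n \ge 3k+2$. Then $S/(I(C_n^k), A_{n-1})$ is isomorphic to $K[x_1,\dots,x_{n-k}]/I(P_{n-k}^k)$ (after renumbering variables), where $A_{n-1} = (x_{n-k},\dots,x_{n-1})$. -/

import Mathlib

/-!
Killing `x_{n-k}, …, x_{n-1}` deletes `k` consecutive vertices of `C_n^k`. Listed in the order
`n, 1, 2, …, n-k-1`, the surviving vertices induce `P_{n-k}^k`: among them, vertex `n` is adjacent
on the cycle exactly to `1, …, k`, and no other wrap-around edge survives. Renaming the variables
along this order gives the isomorphism.
-/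

open MvPolynomial

/-- The edge ideal of the `k`-th power of the path on `n` vertices in
`S = K[x_1,…,x_n]` (the variable `X t` for `t : Fin n` is `x_{t+1}` in 1-based labels):
generated by the `x_i x_j` with `0 < j - i ≤ k`. -/
noncomputable def pathIdeal (K : Type*) [Field K] (n k : ℕ) :
    Ideal (MvPolynomial (Fin n) K) :=
  Ideal.span {m | ∃ i j : Fin n, (i : ℕ) < j ∧ (j : ℕ) - i ≤ k ∧ m = X i * X j}

/-- The edge ideal of the `k`-th power of the cycle on `n` vertices in `K[x_1,…,x_n]`. -/
noncomputable def cycleIdeal (K : Type*) [Field K] (n k : ℕ) :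
    Ideal (MvPolynomial (Fin n) K) :=
  Ideal.span {m | ∃ i j : Fin n, (i : ℕ) < j ∧ ((j : ℕ) - i ≤ k ∨ n - k ≤ (j : ℕ) - i) ∧
    m = X i * X j}

/-- The edge ideal, regarded in `K[x_1,…,x_n]`, of the `k`-th power of the path on the
consecutive vertices with 1-based labels `a,…,b`. -/
noncomputable def pathIdealOn (K : Type*) [Field K] (n k a b : ℕ) :
    Ideal (MvPolynomial (Fin n) K) :=
  Ideal.span {m | ∃ i j : Fin n, a ≤ (i : ℕ) + 1 ∧ (j : ℕ) + 1 ≤ b ∧ (i : ℕ) < j ∧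
    (j : ℕ) - i ≤ k ∧ m = X i * X j}

/-- The monomial prime ideal `(x_a, x_{a+1}, …, x_b)` of `K[x_1,…,x_n]` (1-based labels). -/
noncomputable def varSpan (K : Type*) [Field K] (n a b : ℕ) :
    Ideal (MvPolynomial (Fin n) K) :=
  Ideal.span {m | ∃ t : Fin n, a ≤ (t : ℕ) + 1 ∧ (t : ℕ) + 1 ≤ b ∧ m = X t}

/-- The depth of `S/I` with respect to the maximal graded ideal `(x_1,…,x_n)`:
the supremum of lengths of (weakly) regular sequences on `S/I` from `(x_1,…,x_n)`. -/
noncomputable def pdepth {K : Type*} [Field K] {n : ℕ} (I : Ideal (MvPolynomial (Fin n) K)) :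
    ℕ∞ :=
  sSup {d : ℕ∞ | ∃ rs : List (MvPolynomial (Fin n) K),
    (∀ r ∈ rs, r ∈ Ideal.span (Set.range (X (R := K) (σ := Fin n)))) ∧
    RingTheory.Sequence.IsWeaklyRegular (MvPolynomial (Fin n) K ⧸ I) rs ∧
    (rs.length : ℕ∞) = d}

/-- The set of exponent vectors of monomials belonging to a (monomial) ideal `I`. -/
def monSet {K : Type*} [Field K] {n : ℕ} (I : Ideal (MvPolynomial (Fin n) K)) :
    Set (Fin n → ℕ) :=
  {a | (∏ i, X i ^ a i : MvPolynomial (Fin n) K) ∈ I}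

/-- The set of exponent vectors of the monomials of the Stanley space `x^a K[W]`. -/
def stanleyInterval {n : ℕ} (a : Fin n → ℕ) (W : Finset (Fin n)) : Set (Fin n → ℕ) :=
  {c | (∀ i, a i ≤ c i) ∧ ∀ i ∉ W, c i = a i}

/-- The Stanley depth of `J/I` for monomial ideals `I ⊆ J` of `K[x_1,…,x_n]`: the largest
`d` such that the monomials of `J \ I` can be partitioned into finitely many Stanley spaces
`x^a K[W]` with `|W| ≥ d` (by Herzog–Vladoiu–Zheng this agrees with the Stanley depth of the
`ℤⁿ`-graded module `J/I` defined via Stanley decompositions). -/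
noncomputable def sdepthQuot {K : Type*} [Field K] {n : ℕ}
    (I J : Ideal (MvPolynomial (Fin n) K)) : ℕ :=
  sSup {d : ℕ | ∃ P : Finset ((Fin n → ℕ) × Finset (Fin n)),
    (∀ p ∈ P, d ≤ p.2.card) ∧
    ∀ c : Fin n → ℕ, (c ∈ monSet J ∧ c ∉ monSet I) ↔
      ∃! p, p ∈ P ∧ c ∈ stanleyInterval p.1 p.2}

namespace MvPolynomial

variable {R σ τ : Type*} [CommRing R] {I : Ideal (MvPolynomial σ R)}
  {J : Ideal (MvPolynomial τ R)}

noncomputable def quotientAlgEquivOfAeval (f : σ → MvPolynomial τ R) (g : τ → MvPolynomial σ R)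
    (hf : I ≤ J.comap (aeval f)) (hg : J ≤ I.comap (aeval g))
    (hgf : ∀ i, aeval g (f i) - X i ∈ I) (hfg : ∀ j, aeval f (g j) - X j ∈ J) :
    (MvPolynomial σ R ⧸ I) ≃ₐ[R] (MvPolynomial τ R ⧸ J) :=
  AlgEquiv.ofAlgHom (Ideal.quotientMapₐ J (aeval f) hf) (Ideal.quotientMapₐ I (aeval g) hg)
    (Ideal.Quotient.algHom_ext _ <| algHom_ext fun j => by
      simpa [Ideal.Quotient.eq] using hfg j)
    (Ideal.Quotient.algHom_ext _ <| algHom_ext fun i => by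
      simpa [Ideal.Quotient.eq] using hgf i)

end MvPolynomial

section CyclePower

variable {K : Type*} [Field K] {n k : ℕ}

/-- The `m`-th vertex (0-based) of the path `n, 1, 2, …, n-k-1` through the cycle vertices left
over after deleting `n-k, …, n-1` (1-based). -/
def pathToCycle (n k : ℕ) (m : Fin (n - k)) : Fin n :=
  if (m : ℕ) = 0 then ⟨n - 1, by have := m.isLt; omega⟩ else ⟨m - 1, by have := m.isLt; omega⟩

theorem pathToCycle_val (m : Fin (n - k)) :
    (pathToCycle n k m : ℕ) = if (m : ℕ) = 0 then n - 1 else m - 1 :=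
  apply_ite Fin.val _ _ _

theorem pathToCycle_injective : Function.Injective (pathToCycle n k) := by
  intro a b hab
  have hval := congrArg Fin.val hab
  have := a.isLt
  have := b.isLt
  simp only [pathToCycle_val] at hval
  ext
  split_ifs at hval <;> omega

theorem pathToCycle_dist_le {a b : Fin (n - k)} (hlt : (pathToCycle n k a : ℕ) < pathToCycle n k b)
    (hadj : (pathToCycle n k b : ℕ) - pathToCycle n k a ≤ k ∨
      n - k ≤ (pathToCycle n k b : ℕ) - pathToCycle n k a) :
    (a : ℕ) - b ≤ k ∧ (b : ℕ) - a ≤ k := by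
  have := a.isLt
  have := b.isLt
  simp only [pathToCycle_val] at hlt hadj
  split_ifs at hlt hadj <;> omega

theorem X_mul_X_mem_pathIdeal {N : ℕ} {a b : Fin N} (hne : a ≠ b) (hle : (a : ℕ) - b ≤ k)
    (hle' : (b : ℕ) - a ≤ k) : X a * X b ∈ pathIdeal K N k := by
  rcases Fin.lt_or_lt_of_ne hne with h | h
  · exact Ideal.subset_span ⟨a, b, h, hle', rfl⟩
  · exact Ideal.subset_span ⟨b, a, h, hle, mul_comm _ _⟩

theorem X_pathToCycle_mul_mem_cycleIdeal {a b : Fin (n - k)} (hlt : a < b)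
    (hdist : (b : ℕ) - a ≤ k) :
    X (pathToCycle n k a) * X (pathToCycle n k b) ∈ cycleIdeal K n k := by
  have := b.isLt
  by_cases ha : (a : ℕ) = 0
  · refine Ideal.subset_span ⟨pathToCycle n k b, pathToCycle n k a, ?_, Or.inr ?_, mul_comm _ _⟩ <;>
      simp only [pathToCycle_val, if_pos ha, if_neg (show (b : ℕ) ≠ 0 by omega)] <;> omega
  · refine Ideal.subset_span ⟨pathToCycle n k a, pathToCycle n k b, ?_, Or.inl ?_, rfl⟩ <;>
      simp only [pathToCycle_val, if_neg ha, if_neg (show (b : ℕ) ≠ 0 by omega)] <;> omega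

theorem mem_range_pathToCycle_iff (hkn : k < n) {t : Fin n} :
    t ∈ Set.range (pathToCycle n k) ↔ (t : ℕ) + 1 < n - k ∨ (t : ℕ) = n - 1 := by
  constructor
  · rintro ⟨m, rfl⟩
    have := m.isLt
    rw [pathToCycle_val]
    split_ifs <;> omega
  · rintro (ht | ht)
    · exact ⟨⟨t + 1, ht⟩, Fin.ext (by simp [pathToCycle_val])⟩
    · exact ⟨⟨0, by omega⟩, Fin.ext (by simp [pathToCycle_val, ht])⟩

noncomputable def cycleToPath (K : Type*) [Field K] (n k : ℕ) :
    Fin n → MvPolynomial (Fin (n - k)) K :=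
  Function.extend (pathToCycle n k) X 0

@[simp]
theorem cycleToPath_pathToCycle (m : Fin (n - k)) :
    cycleToPath K n k (pathToCycle n k m) = X m :=
  pathToCycle_injective.extend_apply _ _ m

theorem cycleToPath_of_notMem_range {t : Fin n} (ht : t ∉ Set.range (pathToCycle n k)) :
    cycleToPath K n k t = 0 :=
  Function.extend_apply' _ _ t ht

theorem cycleIdeal_sup_varSpan_le_comap (hkn : k < n) :
    cycleIdeal K n k ⊔ varSpan K n (n - k) (n - 1) ≤
      (pathIdeal K (n - k) k).comap (aeval (cycleToPath K n k)) := by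
  rw [cycleIdeal, varSpan, ← Ideal.span_union, Ideal.span_le]
  rintro _ (⟨i, j, hij, hadj, rfl⟩ | ⟨t, ht₁, ht₂, rfl⟩)
  · simp only [SetLike.mem_coe, Ideal.mem_comap, map_mul, aeval_X]
    by_cases hi : i ∈ Set.range (pathToCycle n k)
    · by_cases hj : j ∈ Set.range (pathToCycle n k)
      · obtain ⟨a, rfl⟩ := hi
        obtain ⟨b, rfl⟩ := hj
        obtain ⟨hle, hle'⟩ := pathToCycle_dist_le hij hadj
        rw [cycleToPath_pathToCycle, cycleToPath_pathToCycle]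
        exact X_mul_X_mem_pathIdeal (by rintro rfl; exact hij.ne rfl) hle hle'
      · simp [cycleToPath_of_notMem_range hj]
    · simp [cycleToPath_of_notMem_range hi]
  · have ht : t ∉ Set.range (pathToCycle n k) := by
      rw [mem_range_pathToCycle_iff hkn]
      omega
    simp [cycleToPath_of_notMem_range ht]

theorem pathIdeal_le_comap_rename :
    pathIdeal K (n - k) k ≤ (cycleIdeal K n k).comap (rename (pathToCycle n k)) := by
  rw [pathIdeal, Ideal.span_le]
  rintro _ ⟨a, b, hab, hdist, rfl⟩
  simpa using X_pathToCycle_mul_mem_cycleIdeal hab hdist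

end CyclePower

theorem stmt12_general (K : Type*) [Field K] (n k : ℕ) (hn : 3 * k + 2 ≤ n) :
    Nonempty ((MvPolynomial (Fin n) K ⧸ (cycleIdeal K n k ⊔ varSpan K n (n - k) (n - 1))) ≃+*
      (MvPolynomial (Fin (n - k)) K ⧸ pathIdeal K (n - k) k)) := by
  have hkn : k < n := by omega
  refine ⟨(quotientAlgEquivOfAeval (cycleToPath K n k) (X ∘ pathToCycle n k)
    (cycleIdeal_sup_varSpan_le_comap hkn) ?_ (fun t => ?_) (fun m => ?_)).toRingEquiv⟩
  · rw [← rename_eq_aeval]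
    exact pathIdeal_le_comap_rename.trans (Ideal.comap_mono le_sup_left)
  · by_cases ht : t ∈ Set.range (pathToCycle n k)
    · obtain ⟨m, rfl⟩ := ht
      simp
    · rw [cycleToPath_of_notMem_range ht, map_zero, zero_sub, neg_mem_iff]
      rw [mem_range_pathToCycle_iff hkn] at ht
      exact Ideal.mem_sup_right (Ideal.subset_span ⟨t, by omega, by omega, rfl⟩)
  · simp

theorem stmt12 (K : Type*) [Field K] (n k : ℕ) (hk : 2 ≤ k) (hn : 3 * k + 2 ≤ n) :
    Nonempty ((MvPolynomial (Fin n) K ⧸ (cycleIdeal K n k ⊔ varSpan K n (n - k) (n - 1))) ≃+*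
      (MvPolynomial (Fin (n - k)) K ⧸ pathIdeal K (n - k) k)) :=
  stmt12_general K n k hn
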